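/- Let ρ ∈ (0,1]. There exist constants C₀, C₁ > 0 and κ₀ ∈ (0,1), none depending on ρ, such that for every κ ∈ (0,κ₀], every x ∈ D and every u ∈ ℝ, |s_{⌊κ^{−1} u⌋}(x) − S_ρ(x,u)| ≤ C₀ e^{C₁|u|} κ · max{s_{⌊κ^{−1} u⌋}(x), S_ρ(x,u)}. -/

import Mathlib

open Real Filter Set

noncomputable section

/-- `φ₀(κ,ρ,β)`. -/
def phi0 (κ ρ β : ℝ) : ℝ :=
  β * ((1 - κ) * β ^ (2 * ρ) + 2 * (1 + κ * ρ) * β ^ ρ + 1 + κ)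
    / ((1 - κ) * β ^ (2 * ρ) + 2 * (1 - κ * ρ) * β ^ ρ + 1 + κ)

/-- `φ₁(κ,ρ,β)`. -/
def phi1 (κ ρ β : ℝ) : ℝ :=
  β * ((1 + κ) * β ^ (2 * ρ) + 2 * (1 - κ * ρ) * β ^ ρ + 1 - κ)
    / ((1 + κ) * β ^ (2 * ρ) + 2 * (1 + κ * ρ) * β ^ ρ + 1 - κ)

/-- `S` is the (unique) solution of the ODE
`S'(u) = -8ρ S(u)^{1+ρ}/(1+S(u)^ρ)²` with `S(0) = x`, valued in `(0,∞)`. -/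
def IsSsol (ρ x : ℝ) (S : ℝ → ℝ) : Prop :=
  (∀ u : ℝ, 0 < S u) ∧ S 0 = x ∧
    ∀ u : ℝ, HasDerivAt S (-(8 * ρ * S u ^ (1 + ρ)) / (1 + S u ^ ρ) ^ 2) u

/-!
In the coordinate `F = flowCoord ρ`, `F(y) = y^ρ - y^{-ρ} + 2ρ log y`, whose derivative is
`ρ (1 + y^ρ)² / y^{1+ρ}`, the flow is a translation: `F(S_ρ(x,u)) = F(x) - 8ρ²u`.
Since `φ₀(β) = β (1 + phiEps κ ρ (β^ρ))` and `φ₁` is `φ₀` with `κ` replaced by `-κ`,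
a second-order expansion of `F` around `β` shows that `s` is a translation by `-8κρ²` up to
an error `O(κ²ρ²)`, uniformly on `(0,∞)`. After `⌊u/κ⌋` steps the two `F`-values differ by
`O(ρ²κ(1 + |u|))`. Since `F` stretches `log` by at least `2ρ`, the logarithms differ by
`O(κ(1 + |u|))`, and `|a - b| ≤ |log a - log b| max a b`.
-/

lemma abs_log_one_add_sub_le {x : ℝ} (hx : |x| ≤ 1 / 2) : |log (1 + x) - x| ≤ 2 * x ^ 2 := by
  have h := abs_log_sub_add_sum_range_le (x := -x) (by rw [abs_neg]; linarith) 1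
  simp only [Finset.range_one, Finset.sum_singleton, zero_add, pow_one, Nat.cast_zero,
    div_one, sub_neg_eq_add, abs_neg, one_add_one_eq_two, sq_abs] at h
  calc |log (1 + x) - x| = |-x + log (1 + x)| := by ring_nf
    _ ≤ x ^ 2 / (1 - |x|) := h
    _ ≤ 2 * x ^ 2 := by
        rw [div_le_iff₀ (by linarith)]
        nlinarith [sq_nonneg x]

lemma sq_mul_log_one_add_le {ρ z : ℝ} (hρ0 : 0 ≤ ρ) (hρ1 : ρ ≤ 1) (hz : |z| ≤ 1 / 2) :
    (ρ * log (1 + z)) ^ 2 ≤ 4 * ρ * z ^ 2 := by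
  have h := abs_log_one_add_sub_le hz
  have hz2 : 2 * z ^ 2 ≤ |z| := by nlinarith [abs_nonneg z, sq_abs z]
  have hlog : |log (1 + z)| ≤ 2 * |z| := by
    linarith [abs_sub_abs_le_abs_sub (log (1 + z)) z]
  have hsq : log (1 + z) ^ 2 ≤ 4 * z ^ 2 := by
    rw [← sq_abs (log _), ← sq_abs z]; nlinarith [abs_nonneg (log (1 + z))]
  calc (ρ * log (1 + z)) ^ 2 = ρ ^ 2 * log (1 + z) ^ 2 := by ring
    _ ≤ ρ * (4 * z ^ 2) := by gcongr; nlinarith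
    _ = 4 * ρ * z ^ 2 := by ring

lemma abs_exp_sub_exp_sub_le {a b : ℝ} (ha : |a| ≤ 1) (hb : |b| ≤ 1) :
    |exp b - exp a - (b - a)| ≤ a ^ 2 + b ^ 2 := by
  have hea := abs_exp_sub_one_sub_id_le ha
  have heb := abs_exp_sub_one_sub_id_le hb
  calc |exp b - exp a - (b - a)| = |(exp b - 1 - b) - (exp a - 1 - a)| := by ring_nf
    _ ≤ _ := (abs_sub _ _).trans (by linarith)

lemma abs_sub_le_abs_log_sub_mul_max {a b : ℝ} (ha : 0 < a) (hb : 0 < b) :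
    |a - b| ≤ |log a - log b| * max a b := by
  wlog hba : b ≤ a generalizing a b
  · rw [abs_sub_comm, abs_sub_comm (log a), max_comm]
    exact this hb ha (le_of_not_ge hba)
  have h := one_sub_inv_le_log_of_pos (div_pos ha hb)
  rw [log_div ha.ne' hb.ne', inv_div] at h
  rw [abs_of_nonneg (sub_nonneg.2 hba), abs_of_nonneg (sub_nonneg.2 (log_le_log hb hba)),
    max_eq_left hba]
  calc a - b = (1 - b / a) * a := by field_simp
    _ ≤ (log a - log b) * a := mul_le_mul_of_nonneg_right h ha.le

lemma abs_sub_mul_floor_inv_mul_le {κ : ℝ} (hκ : 0 < κ) (u : ℝ) :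
    |u - κ * ⌊κ⁻¹ * u⌋| ≤ κ := by
  have h : u - κ * ⌊κ⁻¹ * u⌋ = κ * Int.fract (κ⁻¹ * u) := by
    rw [← Int.self_sub_floor]; field_simp
  rw [h, abs_of_nonneg (mul_nonneg hκ.le (Int.fract_nonneg _))]
  nlinarith [Int.fract_lt_one (κ⁻¹ * u)]

lemma abs_sub_le_mul_abs_of_abs_succ_sub_le {g : ℤ → ℝ} {d : ℝ}
    (h : ∀ i, |g (i + 1) - g i| ≤ d) (j : ℤ) : |g j - g 0| ≤ d * |(j : ℝ)| := by
  have hnat : ∀ (k : ℤ) (n : ℕ), |g (k + n) - g k| ≤ d * n := by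
    intro k n
    induction n with
    | zero => simp
    | succ n ih =>
      calc |g (k + (n + 1 : ℕ)) - g k|
          ≤ |g (k + n + 1) - g (k + n)| + |g (k + n) - g k| := by
            push_cast; rw [← add_assoc]; exact abs_sub_le _ _ _
        _ ≤ d * (n + 1 : ℕ) := by push_cast; linarith [h (k + n)]
  obtain ⟨n, rfl | rfl⟩ := Int.eq_nat_or_neg j
  · simpa using hnat 0 n
  · simpa [abs_sub_comm] using hnat (-n) n

def flowCoord (ρ y : ℝ) : ℝ := y ^ ρ - (y ^ ρ)⁻¹ + 2 * ρ * log y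

section flowCoord

variable {ρ : ℝ}

lemma hasDerivAt_flowCoord {y : ℝ} (hy : 0 < y) :
    HasDerivAt (flowCoord ρ) (ρ * (1 + y ^ ρ) ^ 2 / y ^ (1 + ρ)) y := by
  have hyρ : 0 < y ^ ρ := rpow_pos_of_pos hy ρ
  have hpow := hasDerivAt_rpow_const (p := ρ) (Or.inl hy.ne')
  refine ((hpow.sub (hpow.inv hyρ.ne')).add
    ((hasDerivAt_log hy.ne').const_mul (2 * ρ))).congr_deriv ?_
  rw [rpow_sub hy, rpow_add hy, rpow_one]
  field_simp
  ring

lemma IsSsol.flowCoord_eq {x : ℝ} {S : ℝ → ℝ} (hS : IsSsol ρ x S) (u : ℝ) :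
    flowCoord ρ (S u) = flowCoord ρ x - 8 * ρ ^ 2 * u := by
  obtain ⟨hpos, hS0, hderiv⟩ := hS
  have hflow : ∀ w, HasDerivAt (fun w => flowCoord ρ (S w) + 8 * ρ ^ 2 * w) 0 w := by
    intro w
    have hSρ : 0 < S w ^ ρ := rpow_pos_of_pos (hpos w) ρ
    have hS1ρ : 0 < S w ^ (1 + ρ) := rpow_pos_of_pos (hpos w) _
    refine (((hasDerivAt_flowCoord (hpos w)).comp w (hderiv w)).add
      ((hasDerivAt_id w).const_mul (8 * ρ ^ 2))).congr_deriv ?_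
    field_simp
    ring
  have := is_const_of_deriv_eq_zero (fun w => (hflow w).differentiableAt)
    (fun w => (hflow w).deriv) u 0
  simp only [hS0, mul_zero, add_zero] at this
  linarith

lemma two_mul_log_sub_le_flowCoord_sub (hρ : 0 ≤ ρ) {a b : ℝ} (hb : 0 < b) (hba : b ≤ a) :
    2 * ρ * (log a - log b) ≤ flowCoord ρ a - flowCoord ρ b := by
  have hpow : b ^ ρ ≤ a ^ ρ := rpow_le_rpow hb.le hba hρ
  have hinv : (a ^ ρ)⁻¹ ≤ (b ^ ρ)⁻¹ := inv_anti₀ (rpow_pos_of_pos hb ρ) hpow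
  unfold flowCoord
  linarith

lemma two_mul_abs_log_sub_le_abs_flowCoord_sub (hρ : 0 ≤ ρ) {a b : ℝ} (ha : 0 < a)
    (hb : 0 < b) : 2 * ρ * |log a - log b| ≤ |flowCoord ρ a - flowCoord ρ b| := by
  wlog hba : b ≤ a generalizing a b
  · rw [abs_sub_comm, abs_sub_comm (flowCoord ρ a)]
    exact this hb ha (le_of_not_ge hba)
  have h := two_mul_log_sub_le_flowCoord_sub hρ hb hba
  have hlog : 0 ≤ log a - log b := sub_nonneg.2 (log_le_log hb hba)
  rw [abs_of_nonneg hlog, abs_of_nonneg (by nlinarith)]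
  exact h

lemma flowCoord_mul {β c : ℝ} (hβ : 0 < β) (hc : 0 < c) :
    flowCoord ρ (β * c) = β ^ ρ * exp (ρ * log c) - (β ^ ρ * exp (ρ * log c))⁻¹
      + 2 * ρ * log β + 2 * (ρ * log c) := by
  rw [flowCoord, mul_rpow hβ.le hc.le, log_mul hβ.ne' hc.ne', rpow_def_of_pos hc,
    mul_comm (log c) ρ]
  ring

lemma abs_flowCoord_mul_one_add_sub_le {β x y : ℝ} (hρ0 : 0 ≤ ρ) (hρ1 : ρ ≤ 1) (hβ : 0 < β)
    (hx : |x| ≤ 1 / 2) (hy : |y| ≤ 1 / 2) :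
    |flowCoord ρ (β * (1 + y)) - flowCoord ρ (β * (1 + x))
        - ρ * ((1 + β ^ ρ) ^ 2 / β ^ ρ) * (y - x)|
      ≤ 6 * ρ * ((1 + β ^ ρ) ^ 2 / β ^ ρ) * (x ^ 2 + y ^ 2) := by
  set t := β ^ ρ
  have ht : 0 < t := rpow_pos_of_pos hβ ρ
  have hlin : ∀ z, |z| ≤ 1 / 2 → |ρ * log (1 + z) - ρ * z| ≤ 2 * ρ * z ^ 2 := fun z hz => by
    rw [← mul_sub, abs_mul, abs_of_nonneg hρ0]
    exact (mul_le_mul_of_nonneg_left (abs_log_one_add_sub_le hz) hρ0).trans_eq (by ring)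
  have hsqa := sq_mul_log_one_add_le hρ0 hρ1 hx
  have hsqb := sq_mul_log_one_add_le hρ0 hρ1 hy
  set a := ρ * log (1 + x)
  set b := ρ * log (1 + y)
  have hsq : ∀ z, |z| ≤ 1 / 2 → 4 * ρ * z ^ 2 ≤ 1 := fun z hz => by
    rw [← sq_abs z]; nlinarith [abs_nonneg z]
  have ha : |a| ≤ 1 := (sq_le_one_iff_abs_le_one a).1 (hsqa.trans (hsq x hx))
  have hb : |b| ≤ 1 := (sq_le_one_iff_abs_le_one b).1 (hsqb.trans (hsq y hy))
  have hdiff : flowCoord ρ (β * (1 + y)) - flowCoord ρ (β * (1 + x))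
        - ρ * ((1 + t) ^ 2 / t) * (y - x)
      = t * (exp b - exp a - (b - a)) - (exp (-b) - exp (-a) - (-b - -a)) / t
        + (1 + t) ^ 2 / t * ((b - ρ * y) - (a - ρ * x)) := by
    rw [flowCoord_mul hβ (by linarith [abs_le.1 hy]), flowCoord_mul hβ (by linarith [abs_le.1 hx]),
      exp_neg, exp_neg]
    field_simp
    ring
  have hW : (1 + t) ^ 2 / t = t + 1 / t + 2 := by field_simp; ring
  have hexp := abs_exp_sub_exp_sub_le ha hb
  have hexp_neg := abs_exp_sub_exp_sub_le (a := -a) (b := -b) (by rwa [abs_neg]) (by rwa [abs_neg])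
  rw [neg_sq, neg_sq] at hexp_neg
  have hquad := mul_le_mul_of_nonneg_left (add_le_add hsqa hsqb) (by positivity : 0 ≤ t + 1 / t)
  rw [hdiff, hW]
  calc _ ≤ t * (a ^ 2 + b ^ 2) + (a ^ 2 + b ^ 2) / t
        + (t + 1 / t + 2) * (2 * ρ * y ^ 2 + 2 * ρ * x ^ 2) := by
        refine (abs_add_le _ _).trans (add_le_add ((abs_sub _ _).trans (add_le_add ?_ ?_)) ?_)
        · rw [abs_mul, abs_of_pos ht]; gcongr
        · rw [abs_div, abs_of_pos ht]; gcongr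
        · rw [abs_mul, abs_of_nonneg (by positivity)]
          gcongr
          exact (abs_sub _ _).trans (add_le_add (hlin y hy) (hlin x hx))
    _ = (t + 1 / t) * (a ^ 2 + b ^ 2) + (t + 1 / t + 2) * (2 * ρ * (x ^ 2 + y ^ 2)) := by ring
    _ ≤ 6 * ρ * (t + 1 / t + 2) * (x ^ 2 + y ^ 2) := by
        nlinarith [mul_nonneg hρ0 (add_nonneg (sq_nonneg x) (sq_nonneg y))]

end flowCoord

def phiDen (κ ρ t : ℝ) : ℝ := (1 + t) ^ 2 - κ * (t ^ 2 + 2 * ρ * t - 1)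

def phiEps (κ ρ t : ℝ) : ℝ := 4 * κ * ρ * t / phiDen κ ρ t

section maps

variable {κ ρ t β : ℝ}

lemma phi1_eq_phi0_neg (κ ρ : ℝ) : phi1 κ ρ = phi0 (-κ) ρ := by
  funext β
  unfold phi0 phi1
  ring_nf

lemma half_sq_le_phiDen (hρ0 : 0 ≤ ρ) (hρ1 : ρ ≤ 1) (hκ : |κ| ≤ 1 / 2) (ht : 0 < t) :
    (1 + t) ^ 2 / 2 ≤ phiDen κ ρ t := by
  have hm : |t ^ 2 + 2 * ρ * t - 1| ≤ (1 + t) ^ 2 := abs_le.2 ⟨by nlinarith, by nlinarith⟩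
  have hκm : κ * (t ^ 2 + 2 * ρ * t - 1) ≤ 1 / 2 * (1 + t) ^ 2 :=
    (le_abs_self _).trans (abs_mul κ _ ▸ mul_le_mul hκ hm (abs_nonneg _) (by norm_num))
  unfold phiDen
  linarith

lemma rpow_two_mul_eq_sq (hβ : 0 ≤ β) : β ^ (2 * ρ) = (β ^ ρ) ^ 2 := by
  rw [mul_comm, rpow_mul hβ, rpow_two]

lemma phi0_den_eq (hβ : 0 < β) :
    (1 - κ) * β ^ (2 * ρ) + 2 * (1 - κ * ρ) * β ^ ρ + 1 + κ = phiDen κ ρ (β ^ ρ) := by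
  rw [rpow_two_mul_eq_sq hβ.le, phiDen]; ring

lemma phi0_eq (hβ : 0 < β) (hD : phiDen κ ρ (β ^ ρ) ≠ 0) :
    phi0 κ ρ β = β * (1 + phiEps κ ρ (β ^ ρ)) := by
  rw [phi0, phiEps, phi0_den_eq hβ, rpow_two_mul_eq_sq hβ.le]
  field_simp
  rw [phiDen]; ring

lemma abs_sq_div_mul_phiEps_le (hρ0 : 0 ≤ ρ) (hρ1 : ρ ≤ 1) (hκ : |κ| ≤ 1 / 2) (ht : 0 < t) :
    |(1 + t) ^ 2 / t * phiEps κ ρ t| ≤ 8 * |κ| * ρ := by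
  have hD := half_sq_le_phiDen hρ0 hρ1 hκ ht
  have hA : 0 < (1 + t) ^ 2 := by positivity
  have h : (1 + t) ^ 2 / t * phiEps κ ρ t = 4 * κ * ρ * ((1 + t) ^ 2 / phiDen κ ρ t) := by
    rw [phiEps]; field_simp
  rw [h, abs_mul, abs_mul, abs_mul, abs_of_nonneg hρ0, abs_of_pos (by linarith : (0 : ℝ) < 4),
    abs_of_pos (div_pos hA (by linarith))]
  have : (1 + t) ^ 2 / phiDen κ ρ t ≤ 2 := by
    rw [div_le_iff₀ (by linarith)]; linarith
  have := mul_nonneg (abs_nonneg κ) hρ0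
  nlinarith

lemma abs_phiEps_le (hρ0 : 0 ≤ ρ) (hρ1 : ρ ≤ 1) (hκ : |κ| ≤ 1 / 2) (ht : 0 < t) :
    |phiEps κ ρ t| ≤ 2 * |κ| * ρ := by
  have h := abs_sq_div_mul_phiEps_le hρ0 hρ1 hκ ht
  have hW : 4 ≤ (1 + t) ^ 2 / t := by rw [le_div_iff₀ ht]; nlinarith [sq_nonneg (1 - t)]
  rw [abs_mul, abs_of_pos (by linarith)] at h
  nlinarith [abs_nonneg (phiEps κ ρ t)]

lemma abs_sq_div_mul_phiEps_neg_sub_add_le (hρ0 : 0 ≤ ρ) (hρ1 : ρ ≤ 1) (hκ : |κ| ≤ 1 / 8)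
    (ht : 0 < t) :
    |ρ * ((1 + t) ^ 2 / t) * (phiEps (-κ) ρ t - phiEps κ ρ t) + 8 * κ * ρ ^ 2|
      ≤ 4 * κ ^ 2 * ρ ^ 2 := by
  have hκ' : |-κ| ≤ 1 / 2 := by rw [abs_neg]; linarith
  have hDκ := half_sq_le_phiDen hρ0 hρ1 (hκ.trans (by norm_num)) ht
  have hDnegκ := half_sq_le_phiDen hρ0 hρ1 hκ' ht
  have hA : 0 < (1 + t) ^ 2 := by positivity
  have hm : (t ^ 2 + 2 * ρ * t - 1) ^ 2 ≤ ((1 + t) ^ 2) ^ 2 := by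
    rw [sq_le_sq, abs_of_pos hA]; exact abs_le.2 ⟨by nlinarith, by nlinarith⟩
  have h : ρ * ((1 + t) ^ 2 / t) * (phiEps (-κ) ρ t - phiEps κ ρ t) + 8 * κ * ρ ^ 2
      = -8 * κ ^ 3 * ρ ^ 2 * ((t ^ 2 + 2 * ρ * t - 1) ^ 2 / (phiDen κ ρ t * phiDen (-κ) ρ t)) := by
    have h0 : phiDen κ ρ t ≠ 0 := by linarith
    have h1 : phiDen (-κ) ρ t ≠ 0 := by linarith
    -- first-order terms cancel since `phiDen κ ρ t + phiDen (-κ) ρ t = 2 (1 + t) ^ 2`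
    rw [phiEps, phiEps]
    field_simp
    simp only [phiDen]
    ring
  have hDD : ((1 + t) ^ 2) ^ 2 / 4 ≤ phiDen κ ρ t * phiDen (-κ) ρ t := by
    nlinarith [mul_le_mul hDκ hDnegκ (by positivity) (by linarith)]
  have hDpos : 0 < phiDen κ ρ t * phiDen (-κ) ρ t := mul_pos (by linarith) (by linarith)
  have hratio0 : 0 ≤ (t ^ 2 + 2 * ρ * t - 1) ^ 2 / (phiDen κ ρ t * phiDen (-κ) ρ t) :=
    div_nonneg (sq_nonneg _) hDpos.le
  have hratio : (t ^ 2 + 2 * ρ * t - 1) ^ 2 / (phiDen κ ρ t * phiDen (-κ) ρ t) ≤ 4 := by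
    rw [div_le_iff₀ hDpos]; linarith
  have hκ3 : |κ| ^ 3 ≤ κ ^ 2 / 8 := by
    rw [← sq_abs κ]; nlinarith [abs_nonneg κ, sq_nonneg |κ|]
  rw [h, abs_mul, abs_of_nonneg hratio0, abs_mul, abs_mul, abs_pow, abs_of_nonneg (sq_nonneg ρ),
    abs_neg, abs_of_pos (by norm_num : (0 : ℝ) < 8)]
  nlinarith [mul_le_mul hκ3 hratio hratio0 (by positivity), sq_nonneg ρ]

lemma continuousOn_phi0 (hρ0 : 0 ≤ ρ) (hρ1 : ρ ≤ 1) (hκ : |κ| ≤ 1 / 2) :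
    ContinuousOn (phi0 κ ρ) (Ioi 0) := by
  have hpow : Continuous (fun β : ℝ => β ^ ρ) := continuous_rpow_const hρ0
  have hpow2 : Continuous (fun β : ℝ => β ^ (2 * ρ)) := continuous_rpow_const (by positivity)
  refine ContinuousOn.div (by fun_prop) (by fun_prop) fun β (hβ : 0 < β) => ?_
  rw [phi0_den_eq hβ]
  have := half_sq_le_phiDen hρ0 hρ1 hκ (rpow_pos_of_pos hβ ρ)
  have : 0 < (1 + β ^ ρ) ^ 2 := by positivity
  linarith

lemma phi0_mem_Icc (hρ0 : 0 ≤ ρ) (hρ1 : ρ ≤ 1) (hκ : |κ| ≤ 1 / 4) (hβ : 0 < β) :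
    phi0 κ ρ β ∈ Icc (β / 2) (2 * β) := by
  have ht := rpow_pos_of_pos hβ ρ
  have hκ' : |κ| ≤ 1 / 2 := hκ.trans (by norm_num)
  have hD := half_sq_le_phiDen hρ0 hρ1 hκ' ht
  rw [phi0_eq hβ (by nlinarith)]
  have hε := abs_le.1 ((abs_phiEps_le hρ0 hρ1 hκ' ht).trans (show 2 * |κ| * ρ ≤ 1 / 2 by
    nlinarith [abs_nonneg κ]))
  constructor <;> nlinarith [hε.1, hε.2]

lemma exists_phi0_eq (hρ0 : 0 ≤ ρ) (hρ1 : ρ ≤ 1) (hκ : |κ| ≤ 1 / 4) {y : ℝ} (hy : 0 < y) :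
    ∃ β, 0 < β ∧ phi0 κ ρ β = y := by
  have hcont := (continuousOn_phi0 hρ0 hρ1 (hκ.trans (by norm_num))).mono
    fun z (hz : z ∈ Icc (y / 2) (2 * y)) => show 0 < z by linarith [hz.1]
  have hmem : y ∈ Icc (phi0 κ ρ (y / 2)) (phi0 κ ρ (2 * y)) :=
    ⟨by linarith [(phi0_mem_Icc hρ0 hρ1 hκ (by positivity : (0 : ℝ) < y / 2)).2],
     by linarith [(phi0_mem_Icc hρ0 hρ1 hκ (by positivity : (0 : ℝ) < 2 * y)).1]⟩
  obtain ⟨β, hβ, hβy⟩ := intermediate_value_Icc (by linarith) hcont hmem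
  exact ⟨β, by linarith [hβ.1], hβy⟩

theorem abs_flowCoord_phi1_sub_flowCoord_phi0_add_le (hρ0 : 0 ≤ ρ) (hρ1 : ρ ≤ 1)
    (hκ : |κ| ≤ 1 / 8) (hβ : 0 < β) :
    |flowCoord ρ (phi1 κ ρ β) - flowCoord ρ (phi0 κ ρ β) + 8 * κ * ρ ^ 2|
      ≤ 200 * κ ^ 2 * ρ ^ 2 := by
  have ht := rpow_pos_of_pos hβ ρ
  have hκ' : |-κ| ≤ 1 / 8 := by rwa [abs_neg]
  have hDκ := half_sq_le_phiDen hρ0 hρ1 (hκ.trans (by norm_num)) ht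
  have hDnegκ := half_sq_le_phiDen hρ0 hρ1 (hκ'.trans (by norm_num)) ht
  rw [phi1_eq_phi0_neg, phi0_eq hβ (by nlinarith), phi0_eq hβ (by nlinarith)]
  set t := β ^ ρ
  set W := (1 + t) ^ 2 / t
  have hsmall : 2 * |κ| * ρ ≤ 1 / 2 := by nlinarith [abs_nonneg κ]
  have hx := abs_phiEps_le hρ0 hρ1 (hκ.trans (by norm_num)) ht
  have hy := abs_phiEps_le hρ0 hρ1 (hκ'.trans (by norm_num)) ht
  rw [abs_neg] at hy
  have hWx := abs_sq_div_mul_phiEps_le hρ0 hρ1 (hκ.trans (by norm_num)) ht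
  have hWy := abs_sq_div_mul_phiEps_le hρ0 hρ1 (hκ'.trans (by norm_num)) ht
  rw [abs_neg] at hWy
  have hlin := abs_flowCoord_mul_one_add_sub_le hρ0 hρ1 hβ (hx.trans hsmall) (hy.trans hsmall)
  have hmain := abs_sq_div_mul_phiEps_neg_sub_add_le hρ0 hρ1 hκ ht
  have hquad : ∀ ε, |ε| ≤ 2 * |κ| * ρ → |W * ε| ≤ 8 * |κ| * ρ → W * ε ^ 2 ≤ 16 * κ ^ 2 * ρ ^ 2 := by
    intro ε h1 h2
    have hW : 0 < W := by positivity
    calc W * ε ^ 2 = |W * ε| * |ε| := by rw [abs_mul, abs_of_pos hW, ← sq_abs ε]; ring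
      _ ≤ (8 * |κ| * ρ) * (2 * |κ| * ρ) := mul_le_mul h2 h1 (abs_nonneg _) (by positivity)
      _ = 16 * κ ^ 2 * ρ ^ 2 := by rw [← sq_abs κ]; ring
  have hqx := hquad _ hx hWx
  have hqy := hquad _ hy hWy
  have hρ3 : ρ * (κ ^ 2 * ρ ^ 2) ≤ κ ^ 2 * ρ ^ 2 := by
    nlinarith [mul_nonneg (sq_nonneg κ) (sq_nonneg ρ)]
  calc _ = |(flowCoord ρ (β * (1 + phiEps (-κ) ρ t)) - flowCoord ρ (β * (1 + phiEps κ ρ t))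
            - ρ * W * (phiEps (-κ) ρ t - phiEps κ ρ t))
          + (ρ * W * (phiEps (-κ) ρ t - phiEps κ ρ t) + 8 * κ * ρ ^ 2)| := by ring_nf
    _ ≤ 6 * ρ * W * (phiEps κ ρ t ^ 2 + phiEps (-κ) ρ t ^ 2) + 4 * κ ^ 2 * ρ ^ 2 :=
        (abs_add_le _ _).trans (add_le_add hlin hmain)
    _ ≤ 200 * κ ^ 2 * ρ ^ 2 := by nlinarith

end maps

theorem abs_flowCoord_iter_sub_add_le {κ ρ : ℝ} (hρ0 : 0 ≤ ρ) (hρ1 : ρ ≤ 1) (hκ : |κ| ≤ 1 / 8)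
    {s : ℝ → ℝ} (hs : ∀ β : ℝ, 0 < β → s (phi0 κ ρ β) = phi1 κ ρ β) {siter : ℤ → ℝ → ℝ}
    (hzero : ∀ x : ℝ, 0 < x → siter 0 x = x) (hpos : ∀ (i : ℤ) (x : ℝ), 0 < x → 0 < siter i x)
    (hsucc : ∀ (i : ℤ) (x : ℝ), 0 < x → siter (i + 1) x = s (siter i x)) {x : ℝ} (hx : 0 < x)
    (j : ℤ) :
    |flowCoord ρ (siter j x) - flowCoord ρ x + 8 * κ * ρ ^ 2 * j|
      ≤ 200 * κ ^ 2 * ρ ^ 2 * |(j : ℝ)| := by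
  have hstep : ∀ i : ℤ, |(flowCoord ρ (siter (i + 1) x) + 8 * κ * ρ ^ 2 * ((i + 1 : ℤ) : ℝ))
      - (flowCoord ρ (siter i x) + 8 * κ * ρ ^ 2 * i)| ≤ 200 * κ ^ 2 * ρ ^ 2 := by
    intro i
    obtain ⟨β, hβ, hβi⟩ := exists_phi0_eq hρ0 hρ1 (hκ.trans (by norm_num)) (hpos i x hx)
    rw [hsucc i x hx, ← hβi, hs β hβ]
    convert abs_flowCoord_phi1_sub_flowCoord_phi0_add_le hρ0 hρ1 hκ hβ using 2
    push_cast; ring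
  simpa [hzero x hx, add_sub_right_comm] using
    abs_sub_le_mul_abs_of_abs_succ_sub_le
      (g := fun i => flowCoord ρ (siter i x) + 8 * κ * ρ ^ 2 * i) hstep j

theorem abs_log_iter_floor_sub_log_le {κ ρ : ℝ} (hρ0 : 0 < ρ) (hρ1 : ρ ≤ 1) (hκ0 : 0 < κ)
    (hκ : κ ≤ 1 / 8) {s : ℝ → ℝ} (hs : ∀ β : ℝ, 0 < β → s (phi0 κ ρ β) = phi1 κ ρ β)
    {siter : ℤ → ℝ → ℝ} (hzero : ∀ x : ℝ, 0 < x → siter 0 x = x)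
    (hpos : ∀ (i : ℤ) (x : ℝ), 0 < x → 0 < siter i x)
    (hsucc : ∀ (i : ℤ) (x : ℝ), 0 < x → siter (i + 1) x = s (siter i x)) {x : ℝ} (hx : 0 < x)
    {S : ℝ → ℝ} (hS : IsSsol ρ x S) (u : ℝ) :
    |log (siter ⌊κ⁻¹ * u⌋ x) - log (S u)| ≤ 100 * κ * (1 + |u|) := by
  have hfloor := abs_sub_mul_floor_inv_mul_le hκ0 u
  set i := ⌊κ⁻¹ * u⌋
  have hiter := abs_flowCoord_iter_sub_add_le hρ0.le hρ1 (abs_le.2 ⟨by linarith, hκ⟩) hs hzero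
    hpos hsucc hx i
  have hκi : κ * |(i : ℝ)| ≤ |u| + κ := by
    rw [← abs_of_pos hκ0, ← abs_mul, abs_of_pos hκ0]
    linarith [abs_sub_abs_le_abs_sub (κ * i) u, abs_sub_comm u (κ * i)]
  have hflow : |flowCoord ρ (siter i x) - flowCoord ρ (S u)|
      ≤ 8 * ρ ^ 2 * κ + 200 * κ ^ 2 * ρ ^ 2 * |(i : ℝ)| := by
    rw [hS.flowCoord_eq u]
    calc _ = |(flowCoord ρ (siter i x) - flowCoord ρ x + 8 * κ * ρ ^ 2 * i)
            + 8 * ρ ^ 2 * (u - κ * i)| := by ring_nf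
      _ ≤ _ := by
        refine (abs_add_le _ _).trans ?_
        rw [abs_mul, abs_of_nonneg (by positivity : (0 : ℝ) ≤ 8 * ρ ^ 2)]
        nlinarith [sq_nonneg ρ]
  have hρ2 : κ * ρ ^ 2 ≤ κ * ρ := mul_le_mul_of_nonneg_left (by nlinarith) hκ0.le
  have hbound : 8 * ρ ^ 2 * κ + 200 * κ ^ 2 * ρ ^ 2 * |(i : ℝ)|
      ≤ 2 * ρ * (100 * κ * (1 + |u|)) := by
    have h1 := mul_le_mul_of_nonneg_left hκi (by positivity : (0 : ℝ) ≤ 200 * κ * ρ ^ 2)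
    have h2 := mul_le_mul_of_nonneg_right hρ2 (abs_nonneg u)
    have h3 := mul_le_mul_of_nonneg_right hρ2 hκ0.le
    have h4 := mul_le_mul_of_nonneg_left hκ (by positivity : (0 : ℝ) ≤ κ * ρ)
    nlinarith
  exact le_of_mul_le_mul_left
    (((two_mul_abs_log_sub_le_abs_flowCoord_sub hρ0.le (hpos i x hx) (hS.1 u)).trans hflow).trans
      hbound) (by positivity)

theorem stmt19 :
    ∃ C₀ C₁ κ₀ : ℝ, 0 < C₀ ∧ 0 < C₁ ∧ κ₀ ∈ Set.Ioo (0:ℝ) 1 ∧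
      ∀ ρ ∈ Set.Ioc (0:ℝ) 1, ∀ κ ∈ Set.Ioc (0:ℝ) κ₀,
        ∀ s : ℝ → ℝ, (∀ β : ℝ, 0 < β → s (phi0 κ ρ β) = phi1 κ ρ β) →
        ∀ siter : ℤ → ℝ → ℝ,
          (∀ x : ℝ, 0 < x → siter 0 x = x) →
          (∀ (i : ℤ) (x : ℝ), 0 < x → 0 < siter i x) →
          (∀ (i : ℤ) (x : ℝ), 0 < x → siter (i + 1) x = s (siter i x)) →
        ∀ x ∈ Set.Ioc ((2 - κ * ρ) / (2 + κ * ρ)) ((2 + κ * ρ) / (2 - κ * ρ)),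
        ∀ S : ℝ → ℝ, IsSsol ρ x S →
        ∀ u : ℝ,
          |siter ⌊κ⁻¹ * u⌋ x - S u|
            ≤ C₀ * Real.exp (C₁ * |u|) * κ * max (siter ⌊κ⁻¹ * u⌋ x) (S u) := by
  refine ⟨100, 1, 1 / 8, by norm_num, by norm_num, ⟨by norm_num, by norm_num⟩, ?_⟩
  rintro ρ ⟨hρ0, hρ1⟩ κ ⟨hκ0, hκ⟩ s hs siter hzero hpos hsucc x hx S hS u
  have hκρ : 0 < κ * ρ := mul_pos hκ0 hρ0
  have hx0 : 0 < x := lt_of_le_of_lt (div_nonneg (by nlinarith) (by linarith)) hx.1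
  have hexp : 1 + |u| ≤ exp (1 * |u|) := by rw [one_mul, add_comm]; exact add_one_le_exp _
  have hiter_pos := hpos ⌊κ⁻¹ * u⌋ x hx0
  calc |siter ⌊κ⁻¹ * u⌋ x - S u|
      ≤ |log (siter ⌊κ⁻¹ * u⌋ x) - log (S u)| * max (siter ⌊κ⁻¹ * u⌋ x) (S u) :=
        abs_sub_le_abs_log_sub_mul_max hiter_pos (hS.1 u)
    _ ≤ 100 * exp (1 * |u|) * κ * max (siter ⌊κ⁻¹ * u⌋ x) (S u) := by
        refine mul_le_mul_of_nonneg_right ?_ (hiter_pos.le.trans (le_max_left _ _))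
        refine (abs_log_iter_floor_sub_log_le hρ0 hρ1 hκ0 hκ hs hzero hpos hsucc hx0 hS u).trans ?_
        nlinarith
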